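/- Let U be an ultrafilter on I and consider functions f : I^r → S for varying r, where a function of arity r is evaluated on a tuple of length q ≥ r by using only its first r coordinates. Define for f of arity r and g of arity r', with q = max(r, r'): f ≈ g iff (U-many i_q)...(U-many i_1) f[i₁,...,i_q] = g[i₁,...,i_q], where the quantifiers 'U-many' are iterated from the outside in. Then ≈ is an equivalence relation on the disjoint union over r of the functions of arity r. -/
import Mathlib


/-- `UMany U P` means `P` holds for `U`-many `i`. -/
def UMany {I : Type*} (U : Ultrafilter I) (P : I → Prop) : Prop :=
  {i | P i} ∈ U

/-- Iterated quantifier `(U-many i_q) … (U-many i_1) P(i₁,…,i_q)`, with the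
outermost quantifier governing the last coordinate. -/
def UIter {I : Type*} (U : Ultrafilter I) : ∀ q : ℕ, ((Fin q → I) → Prop) → Prop
  | 0, P => P Fin.elim0
  | q + 1, P => UMany U fun iq => UIter U q fun t => P (Fin.snoc t iq)

/-- Evaluation of a function of arity `r ≤ q` on a tuple of length `q`, using
only the first `r` coordinates. -/
def evalTup {I S : Type*} {r q : ℕ} (h : r ≤ q) (f : (Fin r → I) → S)
    (t : Fin q → I) : S :=
  f fun j => t (Fin.castLE h j)

lemma UIter_mono {I : Type*} (U : Ultrafilter I) :
    ∀ q : ℕ, ∀ P Q : (Fin q → I) → Prop, (∀ t, P t → Q t) → UIter U q P → UIter U q Q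
  | 0, P, Q, h, hP => h _ hP
  | q + 1, P, Q, h, hP =>
    Filter.mem_of_superset hP fun iq hiq =>
      UIter_mono U q _ _ (fun t ht => h _ ht) hiq

lemma UIter_and {I : Type*} (U : Ultrafilter I) :
    ∀ q : ℕ, ∀ P Q : (Fin q → I) → Prop, UIter U q P → UIter U q Q →
      UIter U q fun t => P t ∧ Q t
  | 0, P, Q, hP, hQ => ⟨hP, hQ⟩
  | q + 1, P, Q, hP, hQ => by
    have := Filter.inter_mem hP hQ
    exact Filter.mem_of_superset this fun iq hiq =>
      UIter_and U q _ _ hiq.1 hiq.2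

lemma UIter_of_forall {I : Type*} (U : Ultrafilter I) :
    ∀ q : ℕ, ∀ P : (Fin q → I) → Prop, (∀ t, P t) → UIter U q P
  | 0, P, h => h _
  | q + 1, P, h =>
    Filter.univ_mem' fun iq => UIter_of_forall U q _ fun t => h _

lemma UMany_const {I : Type*} (U : Ultrafilter I) (c : Prop) :
    UMany U (fun _ => c) ↔ c := by
  by_cases hc : c <;> simp [UMany, hc]
  exact Filter.univ_mem

lemma UIter_lift {I : Type*} (U : Ultrafilter I) (p : ℕ) (P : (Fin p → I) → Prop) :
    ∀ q : ℕ, ∀ h : p ≤ q,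
      UIter U p P ↔ UIter U q fun t => P fun j => t (Fin.castLE h j)
  | 0, h => by
    obtain rfl : p = 0 := Nat.le_zero.mp h
    show P Fin.elim0 ↔ P fun j => Fin.elim0 (Fin.castLE h j)
    have e : (fun j : Fin 0 => (Fin.elim0 (Fin.castLE h j) : I)) = Fin.elim0 :=
      funext fun j => j.elim0
    rw [e]
  | q + 1, h => by
    rcases eq_or_lt_of_le h with heq | hlt
    · subst heq
      have : (fun t : Fin (q + 1) → I => P fun j => t (Fin.castLE h j)) = P := by
        funext t
        exact congrArg P (funext fun j => congrArg t (Fin.ext rfl))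
      rw [this]
    · have h' : p ≤ q := Nat.lt_succ_iff.mp hlt
      have key : ∀ (t : Fin q → I) (iq : I),
          (fun j : Fin p => (Fin.snoc t iq : Fin (q + 1) → I) (Fin.castLE h j))
            = fun j => t (Fin.castLE h' j) := by
        intro t iq
        funext j
        have : Fin.castLE h j = Fin.castSucc (Fin.castLE h' j) := Fin.ext rfl
        rw [this, Fin.snoc_castSucc]
      show UIter U p P ↔ UMany U fun iq => UIter U q fun t =>
        P fun j => (Fin.snoc t iq : Fin (q + 1) → I) (Fin.castLE h j)
      have : ∀ iq : I, (fun t : Fin q → I =>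
            P fun j => (Fin.snoc t iq : Fin (q + 1) → I) (Fin.castLE h j))
          = fun t => P fun j => t (Fin.castLE h' j) := by
        intro iq; funext t; rw [key t iq]
      simp only [this]
      rw [← UIter_lift U p P q h', UMany_const]

/-- Move the relation between `f` and `g` to any common arity bound `q`. -/
lemma rel_iff {I S : Type*} (U : Ultrafilter I) {a b q : ℕ} (ha : a ≤ q) (hb : b ≤ q)
    (f : (Fin a → I) → S) (g : (Fin b → I) → S) :
    (UIter U (max a b) fun t =>
        evalTup (le_max_left a b) f t = evalTup (le_max_right a b) g t) ↔
      UIter U q fun t => evalTup ha f t = evalTup hb g t := by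
  have hm : max a b ≤ q := max_le ha hb
  rw [UIter_lift U (max a b) _ q hm]
  exact Iff.rfl

/-- The adequate-ultrapower relation `f ≈ g`, defined by iterated `U`-many
quantification of coordinatewise equality, is an equivalence relation on the
disjoint union over `r` of the functions of arity `r`. -/
theorem stmt_12 {I S : Type*} (U : Ultrafilter I) :
    Equivalence (fun f g : Σ r : ℕ, ((Fin r → I) → S) =>
      UIter U (max f.1 g.1) fun t =>
        evalTup (le_max_left f.1 g.1) f.2 t = evalTup (le_max_right f.1 g.1) g.2 t) := by
  constructor
  · intro f
    exact UIter_of_forall U _ _ fun t => rfl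
  · intro f g hfg
    rw [rel_iff U (le_max_right g.1 f.1) (le_max_left g.1 f.1) f.2 g.2] at hfg
    exact UIter_mono U _ _ _ (fun t ht => ht.symm) hfg
  · intro f g h hfg hgh
    set q := max (max f.1 g.1) h.1 with hq
    have hf : f.1 ≤ q := le_trans (le_max_left _ _) (le_max_left _ _)
    have hg : g.1 ≤ q := le_trans (le_max_right _ _) (le_max_left _ _)
    have hh : h.1 ≤ q := le_max_right _ _
    rw [rel_iff U hf hg] at hfg
    rw [rel_iff U hg hh] at hgh
    rw [rel_iff U hf hh]
    exact UIter_mono U q _ _ (fun t ht => ht.1.trans ht.2) (UIter_and U q _ _ hfg hgh)
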